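/- arXiv:2012.01077 — 2 statements merged into one kernel-verified Lean document; each statement's English description precedes it below -/
import Mathlib

section
/- Let λ = (λ₁,…,λ_d) : ℝ → ℝ^d be of class C¹ and let a_1,…,a_d : ℝ → ℝ be the coefficient functions of the monic polynomial P(t)(Z) = ∏_{j=1}^d (Z − λ_j(t)) = Z^d + Σ_{k=1}^d a_k(t) Z^{d−k}. Assume each a_k is of class W^{2,1}_loc, i.e. a_k is C¹ and there is a locally Lebesgue-integrable function w_k : ℝ → ℝ with a_k′(b) − a_k′(a) = ∫_a^b w_k(t) dt for all a ≤ b. Then each derivative λ_j′, j = 1,…,d, has the Luzin (N) property: for every set E ⊆ ℝ of Lebesgue measure zero, the image λ_j′(E) has Lebesgue measure zero. -/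
open Polynomial MeasureTheory

noncomputable def polyAlong {n : ℕ} (f : MvPolynomial (Fin n) ℝ) (x v : Fin n → ℝ) :
    Polynomial ℝ :=
  MvPolynomial.aeval (fun i => Polynomial.C (x i) + Polynomial.X * Polynomial.C (v i)) f

def GardingHyperbolic {n : ℕ} (d : ℕ) (f : MvPolynomial (Fin n) ℝ) (v : Fin n → ℝ) : Prop :=
  f.IsHomogeneous d ∧ MvPolynomial.eval v f ≠ 0 ∧
    ∀ x : Fin n → ℝ, (polyAlong f x (-v)).Splits

def IsCharMap {n : ℕ} (d : ℕ) (f : MvPolynomial (Fin n) ℝ) (v : Fin n → ℝ)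
    (lam : (Fin n → ℝ) → Fin d → ℝ) : Prop :=
  (∀ x, ∀ i j : Fin d, i ≤ j → lam x j ≤ lam x i) ∧
  ∀ x, polyAlong f x v =
      Polynomial.C (MvPolynomial.eval v f) * ∏ j : Fin d, (Polynomial.X + Polynomial.C (lam x j))

def DCOn {E : Type*} [AddCommMonoid E] [Module ℝ E] [TopologicalSpace E]
    (U : Set E) (g : E → ℝ) : Prop :=
  ∃ g₁ g₂ : E → ℝ, ConvexOn ℝ U g₁ ∧ ConvexOn ℝ U g₂ ∧
    ContinuousOn g₁ U ∧ ContinuousOn g₂ U ∧ ∀ x ∈ U, g x = g₁ x - g₂ x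

def W21loc (u : ℝ → ℝ) : Prop :=
  ContDiff ℝ 1 u ∧ ∃ w : ℝ → ℝ, LocallyIntegrable w ∧
    ∀ a b : ℝ, a ≤ b → deriv u b - deriv u a = ∫ t in a..b, w t

def CkLip {E : Type*} [NormedAddCommGroup E] [NormedSpace ℝ E] (k : ℕ) (g : E → ℝ) : Prop :=
  ContDiff ℝ k g ∧ ∀ y : E, ∃ U ∈ nhds y, ∃ K : NNReal, LipschitzOnWith K (iteratedFDeriv ℝ k g) U

/-!
Write `P(t, Z) = ∑ₖ cₖ(t) Zᵏ` and `Dₘ(t) = ∂_Z^m P(t, φ(t))` for a `C¹` root `φ` of `P`. Then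
`D₀ = 0`, `D_N = N! c_N ≠ 0`, and the chain rule gives `Dₘ' = Aₘ + Dₘ₊₁ φ'`, where `Aₘ` is `Dₘ`
with every `cₖ` replaced by `cₖ'`. If `Dₘ(t) = 0 ≠ Dₘ₊₁(t)` and `t` is an accumulation point of the
zeros of `Dₘ`, then `Dₘ'(t) = 0`, so `φ'(t) = -Aₘ(t) / Dₘ₊₁(t)`. Since the `cₖ'` are absolutely
continuous, so is this quotient on every compact interval where `Dₘ₊₁ ≠ 0`, and absolutely
continuous functions map null sets to null sets. The remaining points are isolated zeros of some
`Dₘ`, of which there are only countably many.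
-/

open Set Filter
open scoped Topology

section ImageMeasure

variable {ν : Measure ℝ} {g : ℝ → ℝ}

theorem volume_image_le_of_ordConnected {S : Set ℝ} (hS : S.OrdConnected)
    (hg : ∀ x ∈ S, ∀ y ∈ S, x ≤ y → edist (g x) (g y) ≤ ν (Ioc x y)) :
    volume (g '' S) ≤ ν S := by
  refine (Real.volume_le_diam _).trans (Metric.ediam_le ?_)
  rintro _ ⟨x, hx, rfl⟩ _ ⟨y, hy, rfl⟩
  wlog hxy : x ≤ y generalizing x y
  · rw [edist_comm]; exact this y hy x hx (le_of_not_ge hxy)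
  exact (hg x hx y hy hxy).trans (measure_mono (Ioc_subset_Icc_self.trans (hS.out hx hy)))

theorem volume_image_le_of_isOpen {s U : Set ℝ} (hU : IsOpen U) (hUs : U ⊆ s)
    (hg : ∀ x ∈ s, ∀ y ∈ s, x ≤ y → edist (g x) (g y) ≤ ν (Ioc x y)) :
    volume (g '' U) ≤ ν U := by
  set C : Set (Set ℝ) := connectedComponentIn U '' U
  have hC_open : ∀ S ∈ C, IsOpen S := by
    rintro _ ⟨x, -, rfl⟩
    exact hU.connectedComponentIn
  have hC_disjoint : C.PairwiseDisjoint id := by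
    rintro _ ⟨x, -, rfl⟩ _ ⟨y, -, rfl⟩ hxy
    exact disjoint_left.mpr fun z hzx hzy =>
      hxy ((connectedComponentIn_eq hzx).trans (connectedComponentIn_eq hzy).symm)
  have hC_countable : C.Countable := hC_disjoint.countable_of_isOpen hC_open
    (by rintro _ ⟨x, hx, rfl⟩; exact ⟨x, mem_connectedComponentIn hx⟩)
  have hC_union : ⋃ S ∈ C, S = U := by
    rw [biUnion_image]
    exact subset_antisymm (iUnion₂_subset fun x _ => connectedComponentIn_subset _ _)
      fun x hx => mem_biUnion hx (mem_connectedComponentIn hx)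
  calc volume (g '' U) = volume (⋃ S ∈ C, g '' S) := by rw [← hC_union, image_iUnion₂]
    _ ≤ ∑' S : C, volume (g '' S) := measure_biUnion_le _ hC_countable _
    _ ≤ ∑' S : C, ν S := by
        refine ENNReal.tsum_le_tsum fun ⟨S, hS⟩ => ?_
        obtain ⟨x, -, rfl⟩ := hS
        exact volume_image_le_of_ordConnected isPreconnected_connectedComponentIn.ordConnected
          fun p hp q hq => hg p (hUs (connectedComponentIn_subset _ _ hp))
            q (hUs (connectedComponentIn_subset _ _ hq))
    _ = ν U := by
        rw [← hC_union]
        exact (measure_biUnion hC_countable hC_disjoint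
          fun S hS => (hC_open S hS).measurableSet).symm

theorem volume_image_eq_zero_of_edist_le [IsFiniteMeasure ν] (hν : ν ≪ volume) {a b : ℝ}
    (hg : ∀ x ∈ Icc a b, ∀ y ∈ Icc a b, x ≤ y → edist (g x) (g y) ≤ ν (Ioc x y))
    {E : Set ℝ} (hEab : E ⊆ Icc a b) (hE : volume E = 0) : volume (g '' E) = 0 := by
  refine le_antisymm (ENNReal.le_of_forall_pos_le_add fun ε hε _ => ?_) zero_le
  obtain ⟨U, hEU, hU, hνU⟩ := Set.exists_isOpen_lt_of_lt E ε (by rw [hν hE]; exact_mod_cast hε)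
  have hends : volume (g '' {a, b}) = 0 := ((Set.toFinite _).image g).measure_zero _
  have hcover : g '' E ⊆ g '' {a, b} ∪ g '' (U ∩ Ioo a b) := by
    rw [← image_union]
    refine image_mono fun x hx => ?_
    rcases eq_endpoints_or_mem_Ioo_of_mem_Icc (hEab hx) with rfl | rfl | hx'
    exacts [Or.inl (Or.inl rfl), Or.inl (Or.inr rfl), Or.inr ⟨hEU hx, hx'⟩]
  calc volume (g '' E) ≤ volume (g '' {a, b}) + volume (g '' (U ∩ Ioo a b)) :=
        (measure_mono hcover).trans (measure_union_le _ _)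
    _ ≤ ν (U ∩ Ioo a b) := by
        rw [hends, zero_add]
        exact volume_image_le_of_isOpen (hU.inter isOpen_Ioo)
          (inter_subset_right.trans Ioo_subset_Icc_self) hg
    _ ≤ 0 + ε := by rw [zero_add]; exact (measure_mono inter_subset_left).trans hνU.le

end ImageMeasure

namespace AbsolutelyContinuousOnInterval

theorem fun_finset_sum {F ι : Type*} [SeminormedAddCommGroup F] {s : Finset ι}
    {f : ι → ℝ → F} {a b : ℝ} (hf : ∀ i ∈ s, AbsolutelyContinuousOnInterval (f i) a b) :
    AbsolutelyContinuousOnInterval (fun x => ∑ i ∈ s, f i x) a b := by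
  classical
  induction s using Finset.induction_on with
  | empty =>
    simpa using (LipschitzWith.const (0 : F)).lipschitzOnWith.absolutelyContinuousOnInterval
  | insert i s hi ih =>
    simp_rw [Finset.sum_insert hi]
    exact (hf i (Finset.mem_insert_self i s)).fun_add
      (ih fun j hj => hf j (Finset.mem_insert_of_mem hj))

theorem volume_image_eq_zero {f : ℝ → ℝ} {a b : ℝ} (hf : AbsolutelyContinuousOnInterval f a b)
    {E : Set ℝ} (hEab : E ⊆ uIcc a b) (hE : volume E = 0) : volume (f '' E) = 0 := by
  wlog hab : a ≤ b generalizing a b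
  · exact this hf.symm (uIcc_comm a b ▸ hEab) (le_of_not_ge hab)
  rw [uIcc_of_le hab] at hEab
  have hint : IntegrableOn (deriv f) (Icc a b) :=
    (intervalIntegrable_iff_integrableOn_Icc_of_le hab).mp hf.intervalIntegrable_deriv
  set ν := (volume.restrict (Icc a b)).withDensity fun t => ‖deriv f t‖ₑ
  have : IsFiniteMeasure ν := isFiniteMeasure_withDensity hint.hasFiniteIntegral.ne
  have hν : ν ≪ volume :=
    (withDensity_absolutelyContinuous _ _).trans Measure.restrict_le_self.absolutelyContinuous
  refine volume_image_eq_zero_of_edist_le hν (fun x hx y hy hxy => ?_) hEab hE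
  have hxy_ab : uIcc x y ⊆ uIcc a b := by
    rw [uIcc_of_le hxy, uIcc_of_le hab]
    exact Icc_subset_Icc hx.1 hy.2
  have hsub : Ioc x y ⊆ Icc a b := Ioc_subset_Icc_self.trans (Icc_subset_Icc hx.1 hy.2)
  have hFTC : f y - f x = ∫ t in Ioc x y, deriv f t := by
    rw [← intervalIntegral.integral_of_le hxy, (hf.mono hxy_ab).integral_deriv_eq_sub]
  calc edist (f x) (f y) = ‖∫ t in Ioc x y, deriv f t‖ₑ := by
        rw [edist_comm, edist_eq_enorm_sub, hFTC]
    _ ≤ ∫⁻ t in Ioc x y, ‖deriv f t‖ₑ := enorm_integral_le_lintegral_enorm _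
    _ = ν (Ioc x y) := by
        rw [withDensity_apply _ measurableSet_Ioc, Measure.restrict_restrict measurableSet_Ioc,
          inter_eq_left.mpr hsub]

end AbsolutelyContinuousOnInterval

theorem IsOpen.volume_image_eq_zero_of_absolutelyContinuousOnInterval {g : ℝ → ℝ} {O : Set ℝ}
    (hO : IsOpen O) (hg : ∀ a b, uIcc a b ⊆ O → AbsolutelyContinuousOnInterval g a b)
    {E : Set ℝ} (hEO : E ⊆ O) (hE : volume E = 0) : volume (g '' E) = 0 := by
  have hball : ∀ x ∈ E, ∃ δ > 0, Metric.closedBall x δ ⊆ O := fun x hx =>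
    Metric.nhds_basis_closedBall.mem_iff.mp (hO.mem_nhds (hEO hx))
  choose! δ hδ hδO using hball
  obtain ⟨T, hTE, hT, hET⟩ := TopologicalSpace.countable_cover_nhdsWithin fun x hx =>
    mem_nhdsWithin_of_mem_nhds (Metric.closedBall_mem_nhds x (hδ x hx))
  have hcover : g '' E ⊆ ⋃ x ∈ T, g '' (E ∩ Metric.closedBall x (δ x)) := by
    rintro _ ⟨y, hy, rfl⟩
    obtain ⟨x, hx, hyx⟩ := mem_iUnion₂.mp (hET hy)
    exact mem_iUnion₂.mpr ⟨x, hx, y, ⟨hy, hyx⟩, rfl⟩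
  refine measure_mono_null hcover ((measure_biUnion_null_iff hT).mpr fun x hx => ?_)
  have hball_eq : Metric.closedBall x (δ x) = uIcc (x - δ x) (x + δ x) := by
    rw [Real.closedBall_eq_Icc, uIcc_of_le (by linarith [hδ x (hTE hx)])]
  rw [hball_eq]
  exact (hg _ _ (hball_eq ▸ hδO x (hTE hx))).volume_image_eq_zero inter_subset_right
    (measure_mono_null inter_subset_left hE)

theorem W21loc.absolutelyContinuousOnInterval_deriv {u : ℝ → ℝ} (hu : W21loc u) (a b : ℝ) :
    AbsolutelyContinuousOnInterval (deriv u) a b := by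
  obtain ⟨-, w, hw, hwu⟩ := hu
  have hderiv : deriv u = fun x => (∫ t in a..x, w t) + deriv u a := by
    funext x
    rcases le_total a x with h | h
    · rw [← hwu a x h]; ring
    · rw [intervalIntegral.integral_symm, ← hwu x a h]; ring
  have hw_ab : IntervalIntegrable w volume a b :=
    (hw.integrableOn_isCompact isCompact_uIcc).intervalIntegrable
  rw [hderiv]
  exact (hw_ab.absolutelyContinuousOnInterval_intervalIntegral left_mem_uIcc).fun_add
    contDiffOn_const.absolutelyContinuousOnInterval

theorem HasDerivAt.eq_zero_of_accPt_setOf_eq_zero {h : ℝ → ℝ} {h' t : ℝ}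
    (hh : HasDerivAt h h' t) (ht : h t = 0) (hacc : AccPt t (𝓟 {s | h s = 0})) : h' = 0 :=
  hacc.uniqueDiffWithinAt.eq_deriv _ hh.hasDerivWithinAt
    ((hasDerivWithinAt_const t _ 0).congr (fun _ hs => hs) ht)

theorem countable_setOf_mem_and_not_accPt {X : Type*} [TopologicalSpace X]
    [SecondCountableTopology X] (s : Set X) : {x | x ∈ s ∧ ¬AccPt x (𝓟 s)}.Countable := by
  refine (HereditarilyLindelofSpace.isLindelof _).countable_of_isDiscrete
    (isDiscrete_iff_nhdsNE.mpr fun x hx => ?_)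
  have hx_iso : 𝓝[≠] x ⊓ 𝓟 s = ⊥ := not_neBot.mp hx.2
  exact le_bot_iff.mp (hx_iso ▸ inf_le_inf_left _ (principal_mono.mpr fun y hy => hy.1))

/-- `∂_Z^m P(t, Z)` at `Z = φ t`, where `P(t, Z) = ∑_{k ≤ N} c k t * Z ^ k`. -/
noncomputable def iteratedDerivZEval (c : ℕ → ℝ → ℝ) (N m : ℕ) (φ : ℝ → ℝ) (t : ℝ) : ℝ :=
  ∑ k ∈ Finset.range (N + 1), c k t * k.descFactorial m * φ t ^ (k - m)

section iteratedDerivZEval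

variable {c : ℕ → ℝ → ℝ} {N m : ℕ} {φ : ℝ → ℝ}

theorem iteratedDerivZEval_zero (t : ℝ) :
    iteratedDerivZEval c N 0 φ t = ∑ k ∈ Finset.range (N + 1), c k t * φ t ^ k := by
  simp [iteratedDerivZEval]

theorem iteratedDerivZEval_self (t : ℝ) :
    iteratedDerivZEval c N N φ t = N.factorial * c N t := by
  rw [iteratedDerivZEval, Finset.sum_eq_single_of_mem N (Finset.self_mem_range_succ N)]
  · simp [Nat.descFactorial_self, mul_comm]
  · intro k hk hkN
    have hkN : k < N := lt_of_le_of_ne (Nat.lt_succ_iff.mp (Finset.mem_range.mp hk)) hkN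
    simp [Nat.descFactorial_eq_zero_iff_lt.mpr hkN]

theorem exists_iteratedDerivZEval_eq_zero_and_succ_ne_zero {t : ℝ}
    (hroot : ∑ k ∈ Finset.range (N + 1), c k t * φ t ^ k = 0) (hN : c N t ≠ 0) :
    ∃ m, iteratedDerivZEval c N m φ t = 0 ∧ iteratedDerivZEval c N (m + 1) φ t ≠ 0 := by
  by_contra! h
  have hzero : ∀ m, iteratedDerivZEval c N m φ t = 0 := fun m =>
    Nat.rec ((iteratedDerivZEval_zero t).trans hroot) (fun m hm => h m hm) m
  have hfactorial : (N.factorial : ℝ) ≠ 0 := Nat.cast_ne_zero.mpr N.factorial_ne_zero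
  exact mul_ne_zero hfactorial hN (iteratedDerivZEval_self (c := c) (φ := φ) t ▸ hzero N)

theorem hasDerivAt_iteratedDerivZEval {t : ℝ}
    (hc : ∀ k, DifferentiableAt ℝ (c k) t) (hφ : DifferentiableAt ℝ φ t) :
    HasDerivAt (iteratedDerivZEval c N m φ)
      (iteratedDerivZEval (fun k => deriv (c k)) N m φ t +
        iteratedDerivZEval c N (m + 1) φ t * deriv φ t) t := by
  unfold iteratedDerivZEval
  rw [Finset.sum_mul, ← Finset.sum_add_distrib]
  refine HasDerivAt.fun_sum fun k _ => ?_
  refine (((hc k).hasDerivAt.mul_const (k.descFactorial m : ℝ)).fun_mul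
    (hφ.hasDerivAt.pow (k - m))).congr_deriv ?_
  rw [Pi.pow_apply, Nat.descFactorial_succ, Nat.sub_sub]
  push_cast
  ring

theorem ContDiff.iteratedDerivZEval (hc : ∀ k, ContDiff ℝ 1 (c k)) (hφ : ContDiff ℝ 1 φ) :
    ContDiff ℝ 1 (iteratedDerivZEval c N m φ) :=
  ContDiff.sum fun k _ => ((hc k).mul contDiff_const).mul (hφ.pow _)

theorem AbsolutelyContinuousOnInterval.iteratedDerivZEval {a b : ℝ}
    (hc : ∀ k, AbsolutelyContinuousOnInterval (c k) a b) (hφ : ContDiffOn ℝ 1 φ (uIcc a b)) :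
    AbsolutelyContinuousOnInterval (iteratedDerivZEval c N m φ) a b :=
  fun_finset_sum fun k _ =>
    ((hc k).fun_mul (contDiffOn_const (c := (k.descFactorial m : ℝ))).absolutelyContinuousOnInterval
      ).fun_mul (hφ.pow _).absolutelyContinuousOnInterval

end iteratedDerivZEval

theorem volume_image_deriv_eq_zero_of_forall_root {N : ℕ} {c : ℕ → ℝ → ℝ} {φ : ℝ → ℝ}
    (hc : ∀ k, ContDiff ℝ 1 (c k))
    (hc' : ∀ k a b, AbsolutelyContinuousOnInterval (deriv (c k)) a b)
    (hN : ∀ t, c N t ≠ 0) (hφ : ContDiff ℝ 1 φ)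
    (hroot : ∀ t, ∑ k ∈ Finset.range (N + 1), c k t * φ t ^ k = 0)
    {E : Set ℝ} (hE : volume E = 0) : volume (deriv φ '' E) = 0 := by
  set D : ℕ → ℝ → ℝ := fun m => iteratedDerivZEval c N m φ
  set D' : ℕ → ℝ → ℝ := fun m => iteratedDerivZEval (fun k => deriv (c k)) N m φ
  set V : ℕ → Set ℝ := fun m => {t | D m t = 0}
  set O : ℕ → Set ℝ := fun m => {t | D (m + 1) t ≠ 0}
  set G : ℕ → ℝ → ℝ := fun m t => D' m t * -(D (m + 1) t)⁻¹
  have hD : ∀ m, ContDiff ℝ 1 (D m) := fun m => ContDiff.iteratedDerivZEval hc hφ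
  have hderiv_eq : ∀ m, ∀ t ∈ V m, t ∈ O m → AccPt t (𝓟 (V m)) → deriv φ t = G m t := by
    intro m t htV htO hacc
    have h0 := (hasDerivAt_iteratedDerivZEval (m := m)
      (fun k => (hc k).differentiable one_ne_zero t)
      (hφ.differentiable one_ne_zero t)).eq_zero_of_accPt_setOf_eq_zero htV hacc
    have hD_succ : D (m + 1) t ≠ 0 := htO
    show deriv φ t = D' m t * -(D (m + 1) t)⁻¹
    field_simp
    linarith
  have hcover : deriv φ '' E ⊆
      ⋃ m, G m '' (E ∩ O m) ∪ deriv φ '' {t | t ∈ V m ∧ ¬AccPt t (𝓟 (V m))} := by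
    rintro _ ⟨t, htE, rfl⟩
    obtain ⟨m, htV, htO⟩ := exists_iteratedDerivZEval_eq_zero_and_succ_ne_zero (hroot t) (hN t)
    refine mem_iUnion.mpr ⟨m, ?_⟩
    by_cases hacc : AccPt t (𝓟 (V m))
    · exact Or.inl ⟨t, ⟨htE, htO⟩, (hderiv_eq m t htV htO hacc).symm⟩
    · exact Or.inr ⟨t, ⟨htV, hacc⟩, rfl⟩
  have hG : ∀ m a b, uIcc a b ⊆ O m → AbsolutelyContinuousOnInterval (G m) a b :=
    fun m a b hab => (AbsolutelyContinuousOnInterval.iteratedDerivZEval (fun k => hc' k a b)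
      hφ.contDiffOn).fun_mul
        ((hD _).contDiffOn.inv fun t ht => hab ht).neg.absolutelyContinuousOnInterval
  have hO : ∀ m, IsOpen (O m) := fun m => isOpen_ne_fun (hD _).continuous continuous_const
  refine measure_mono_null hcover (measure_iUnion_null fun m => measure_union_null ?_ ?_)
  · exact (hO m).volume_image_eq_zero_of_absolutelyContinuousOnInterval (hG m)
      inter_subset_right (measure_mono_null inter_subset_left hE)
  · exact ((countable_setOf_mem_and_not_accPt _).image _).measure_zero _

/-- If `λ = (λ₁,…,λ_d) : ℝ → ℝ^d` is `C¹` and the coefficients of the monic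
polynomial `P(t)(Z) = ∏ⱼ (Z - λⱼ(t))` are of class `W^{2,1}_loc`, then every derivative
`λⱼ'` has the Luzin (N) property. -/
theorem deriv_of_roots_luzinN {d : ℕ} (lam : Fin d → ℝ → ℝ)
    (hC1 : ∀ j : Fin d, ContDiff ℝ 1 (lam j))
    (hcoeff : ∀ i : ℕ,
      W21loc (fun t => (∏ j : Fin d, (Polynomial.X - Polynomial.C (lam j t))).coeff i)) :
    ∀ j : Fin d, ∀ E : Set ℝ, volume E = 0 → volume (deriv (lam j) '' E) = 0 := by
  intro j E hE
  set P : ℝ → ℝ[X] := fun t => ∏ j : Fin d, (X - C (lam j t))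
  have hdeg : ∀ t, (P t).natDegree = d := fun t => by
    rw [natDegree_prod_of_monic _ _ fun i _ => monic_X_sub_C _]
    simp
  refine volume_image_deriv_eq_zero_of_forall_root (N := d) (c := fun k t => (P t).coeff k)
    (fun k => (hcoeff k).1) (fun k => (hcoeff k).absolutelyContinuousOnInterval_deriv)
    (fun t => ?_) (hC1 j) (fun t => ?_) hE
  · rw [← hdeg t, (monic_prod_X_sub_C _ _).coeff_natDegree]
    exact one_ne_zero
  · rw [← eval_eq_sum_range' ((hdeg t).trans_lt d.lt_succ_self), eval_prod]
    exact Finset.prod_eq_zero (Finset.mem_univ j) (by simp)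
end

section
/- Let φ : ℝ → ℝ be differentiable everywhere and difference-convex, i.e. φ = g − h for two continuous convex functions g, h : ℝ → ℝ. Then φ is continuously differentiable. -/
/-!
A convex function on `ℝ` has a right derivative everywhere, and it is monotone. Hence the
derivative of `φ = g - h`, which agrees with the difference of the right derivatives of `g` and
`h`, has one-sided limits at every point. A derivative cannot have a jump discontinuity, so these
limits equal the value of `φ'`, which is therefore continuous.
-/

open Set Filter Topology

section JumpDiscontinuity

variable {E : Type*} [NormedAddCommGroup E] [NormedSpace ℝ E] {f : ℝ → E} {x : ℝ} {L : E}

theorem deriv_eq_of_tendsto_deriv_nhdsGT (hf : Differentiable ℝ f)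
    (hL : Tendsto (deriv f) (𝓝[>] x) (𝓝 L)) : deriv f x = L :=
  (uniqueDiffWithinAt_Ici x).eq_deriv _ (hf x).hasDerivAt.hasDerivWithinAt
    (hasDerivWithinAt_Ici_of_tendsto_deriv hf.differentiableOn hf.continuous.continuousWithinAt
      univ_mem hL)

theorem deriv_eq_of_tendsto_deriv_nhdsLT (hf : Differentiable ℝ f)
    (hL : Tendsto (deriv f) (𝓝[<] x) (𝓝 L)) : deriv f x = L :=
  (uniqueDiffWithinAt_Iic x).eq_deriv _ (hf x).hasDerivAt.hasDerivWithinAt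
    (hasDerivWithinAt_Iic_of_tendsto_deriv hf.differentiableOn hf.continuous.continuousWithinAt
      univ_mem hL)

end JumpDiscontinuity

theorem continuous_deriv_of_eq_sub_of_monotone {f u v : ℝ → ℝ} (hf : Differentiable ℝ f)
    (hu : Monotone u) (hv : Monotone v) (hfuv : deriv f = u - v) : Continuous (deriv f) := by
  refine continuous_iff_continuousAt.2 fun x ↦ continuousAt_iff_continuous_left'_right'.2 ⟨?_, ?_⟩
  · have hlim : Tendsto (deriv f) (𝓝[<] x) (𝓝 (sSup (u '' Iio x) - sSup (v '' Iio x))) :=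
      hfuv ▸ (hu.tendsto_nhdsLT x).sub (hv.tendsto_nhdsLT x)
    rwa [ContinuousWithinAt, deriv_eq_of_tendsto_deriv_nhdsLT hf hlim]
  · have hlim : Tendsto (deriv f) (𝓝[>] x) (𝓝 (sInf (u '' Ioi x) - sInf (v '' Ioi x))) :=
      hfuv ▸ (hu.tendsto_nhdsGT x).sub (hv.tendsto_nhdsGT x)
    rwa [ContinuousWithinAt, deriv_eq_of_tendsto_deriv_nhdsGT hf hlim]

namespace ConvexOn

variable {g : ℝ → ℝ}

theorem monotone_rightDeriv (hg : ConvexOn ℝ univ g) :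
    Monotone fun x ↦ derivWithin g (Ioi x) x := by
  simpa using hg.monotoneOn_rightDeriv

theorem hasDerivWithinAt_rightDeriv (hg : ConvexOn ℝ univ g) (x : ℝ) :
    HasDerivWithinAt g (derivWithin g (Ioi x) x) (Ioi x) x :=
  hg.hasDerivWithinAt_rightDeriv_of_mem_interior (by simp)

end ConvexOn

theorem deriv_eq_rightDeriv_sub_rightDeriv {g h : ℝ → ℝ} (hg : ConvexOn ℝ univ g)
    (hh : ConvexOn ℝ univ h) (hd : Differentiable ℝ (g - h)) (x : ℝ) :
    deriv (g - h) x = derivWithin g (Ioi x) x - derivWithin h (Ioi x) x :=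
  (uniqueDiffWithinAt_Ioi x).eq_deriv _ (hd x).hasDerivAt.hasDerivWithinAt
    ((hg.hasDerivWithinAt_rightDeriv x).sub (hh.hasDerivWithinAt_rightDeriv x))

theorem differentiable_DC_is_C1_general (φ g h : ℝ → ℝ)
    (hgc : ConvexOn ℝ Set.univ g) (hhc : ConvexOn ℝ Set.univ h)
    (hφ : ∀ t : ℝ, φ t = g t - h t)
    (hdiff : Differentiable ℝ φ) :
    ContDiff ℝ 1 φ := by
  obtain rfl : φ = g - h := funext hφ
  refine contDiff_one_iff_deriv.2 ⟨hdiff, ?_⟩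
  exact continuous_deriv_of_eq_sub_of_monotone hdiff hgc.monotone_rightDeriv
    hhc.monotone_rightDeriv (funext (deriv_eq_rightDeriv_sub_rightDeriv hgc hhc hdiff))

/-- An everywhere differentiable difference-convex function `φ : ℝ → ℝ` is
continuously differentiable. -/
theorem differentiable_DC_is_C1 (φ g h : ℝ → ℝ)
    (hg : Continuous g) (hh : Continuous h)
    (hgc : ConvexOn ℝ Set.univ g) (hhc : ConvexOn ℝ Set.univ h)
    (hφ : ∀ t : ℝ, φ t = g t - h t)
    (hdiff : Differentiable ℝ φ) :
    ContDiff ℝ 1 φ :=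
  differentiable_DC_is_C1_general φ g h hgc hhc hφ hdiff
end
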